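/- Let K ≥ 1, n_t ≥ 1, n_r ≥ 1 be integers with n_r ≥ (K+1)·n_t. Then for every real r with 0 ≤ r ≤ n_t, min over k ∈ {1, …, K} of d*_{k·n_t, n_r}(k·r) equals d*_{n_t, n_r}(r); i.e., when the receiver has at least (K+1)·n_t antennas, single-user performance is achieved for all multiplexing gains, so space-time codes designed for the single-user MIMO channel achieve the outage diversity-multiplexing tradeoff of the MIMO multiple access channel. -/

import Mathlib

/-!
Write `r = n_t - ε` with `ε ≥ 0`. The curve `d*_{m,n}(x)` is the parabola `(m - x)(n - x)` plus
the periodic bump `{x}(1 - {x})`, and the bump at `r` resp. `k r` equals the bump at `ε` resp.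
`k ε`. For the parabolas, `n_r ≥ (k+1) n_t` gives a gain of at least `(k² - 1) ε²` in passing
from `d*_{n_t,n_r}(r)` to `d*_{k n_t,n_r}(k r)`, and this gain always covers the bump at `ε`:
either `(k² - 1) ε ≥ 1`, and the bump at `ε` is at most `ε`, or `k ε < 1`, and both bumps are
explicit quadratics. So `k = 1` attains the minimum.
-/

/-- The Zheng–Tse diversity-multiplexing tradeoff curve `d*_{m,n}` of an `m × n` MIMO
Rayleigh point-to-point channel: the continuous piecewise-linear function with
`d*(k) = (m−k)(n−k)` at integers `k` and affine on each interval `[k, k+1]`; explicitly,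
for `k = ⌊r⌋`, `d*(r) = (m−k)(n−k) − (r−k)(m+n−2k−1)`. -/
noncomputable def dstar (m n : ℕ) (r : ℝ) : ℝ :=
  ((m : ℝ) - (⌊r⌋ : ℝ)) * ((n : ℝ) - (⌊r⌋ : ℝ)) -
    (r - (⌊r⌋ : ℝ)) * ((m : ℝ) + (n : ℝ) - 2 * (⌊r⌋ : ℝ) - 1)

section FractBump

variable {R : Type*} [Field R] [LinearOrder R] [IsStrictOrderedRing R] [FloorRing R]

def fractBump (x : R) : R := Int.fract x * (1 - Int.fract x)

lemma fractBump_nonneg (x : R) : 0 ≤ fractBump x :=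
  mul_nonneg (Int.fract_nonneg x) (sub_nonneg.2 (Int.fract_lt_one x).le)

lemma fractBump_le_self {x : R} (hx : 0 ≤ x) : fractBump x ≤ x :=
  calc fractBump x ≤ Int.fract x :=
        mul_le_of_le_one_right (Int.fract_nonneg x) (by linarith [Int.fract_nonneg x])
    _ ≤ x := by
        have := Int.self_sub_fract x
        have : (0 : R) ≤ ⌊x⌋ := by exact_mod_cast Int.floor_nonneg.2 hx
        linarith

lemma fractBump_of_nonneg_of_lt_one {x : R} (h0 : 0 ≤ x) (h1 : x < 1) :
    fractBump x = x * (1 - x) := by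
  rw [fractBump, Int.fract_eq_self.2 ⟨h0, h1⟩]

lemma fractBump_neg (x : R) : fractBump (-x) = fractBump x := by
  by_cases hx : Int.fract x = 0
  · simp [fractBump, hx, Int.fract_neg_eq_zero.2 hx]
  · rw [fractBump, fractBump, Int.fract_neg hx]
    ring

lemma fractBump_intCast_sub (m : ℤ) (x : R) : fractBump (m - x) = fractBump x := by
  rw [sub_eq_add_neg, fractBump, Int.fract_intCast_add, ← fractBump, fractBump_neg]

lemma fractBump_le_sq_add_fractBump_natCast_mul {k : ℕ} (hk : 1 ≤ k) {ε : R} (hε : 0 ≤ ε) :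
    fractBump ε ≤ ((k : R) ^ 2 - 1) * ε ^ 2 + fractBump (k * ε) := by
  obtain rfl | hk2 := hk.eq_or_lt
  · simp
  have hk2 : (2 : R) ≤ k := by exact_mod_cast hk2
  by_cases hbig : 1 ≤ ((k : R) ^ 2 - 1) * ε
  · nlinarith [fractBump_le_self hε, fractBump_nonneg ((k : R) * ε)]
  · have hkε : (k : R) * ε < 1 := by nlinarith [not_le.1 hbig]
    rw [fractBump_of_nonneg_of_lt_one hε (by nlinarith),
      fractBump_of_nonneg_of_lt_one (by positivity) hkε]
    nlinarith

end FractBump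

lemma dstar_eq_mul_add_fractBump (m n : ℕ) (x : ℝ) :
    dstar m n x = ((m : ℝ) - x) * (n - x) + fractBump x := by
  unfold dstar fractBump Int.fract
  ring

lemma dstar_le_dstar_natCast_mul {k nt nr : ℕ} (hk : 1 ≤ k) (hnr : (k + 1) * nt ≤ nr) {r : ℝ}
    (hr : r ≤ nt) : dstar nt nr r ≤ dstar (k * nt) nr (k * r) := by
  obtain ⟨ε, hε, rfl⟩ : ∃ ε, 0 ≤ ε ∧ r = nt - ε := ⟨nt - r, by linarith, by ring⟩
  have hbump := fractBump_le_sq_add_fractBump_natCast_mul hk hε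
  have hk' : (1 : ℝ) ≤ k := by exact_mod_cast hk
  have hnr' : ((k : ℝ) + 1) * nt ≤ nr := by exact_mod_cast hnr
  have hbump_r : fractBump ((nt : ℝ) - ε) = fractBump ε := by
    simpa using fractBump_intCast_sub (nt : ℤ) ε
  have hbump_kr : fractBump ((k : ℝ) * (nt - ε)) = fractBump (k * ε) := by
    simpa [mul_sub] using fractBump_intCast_sub ((k * nt : ℕ) : ℤ) ((k : ℝ) * ε)
  rw [dstar_eq_mul_add_fractBump, dstar_eq_mul_add_fractBump, hbump_r, hbump_kr]
  push_cast
  -- the parabolas differ by `ε (k - 1) (n_r - (k + 1) n_t) + (k² - 1) ε²`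
  nlinarith [mul_nonneg (mul_nonneg hε (sub_nonneg.2 hk')) (sub_nonneg.2 hnr')]

theorem mac_dmt_single_user_for_many_rx_general (K nt nr : ℕ) (hK : 1 ≤ K)
    (hnr : (K + 1) * nt ≤ nr) (r : ℝ) (hr1 : r ≤ (nt : ℝ)) :
    (Finset.Icc 1 K).inf' (Finset.nonempty_Icc.mpr hK)
      (fun k => dstar (k * nt) nr ((k : ℝ) * r)) = dstar nt nr r := by
  refine le_antisymm ?_ (Finset.le_inf' _ _ fun k hk => ?_)
  · simpa only [one_mul, Nat.cast_one] using
      Finset.inf'_le (fun k => dstar (k * nt) nr ((k : ℝ) * r)) (Finset.left_mem_Icc.2 hK)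
  · obtain ⟨hk1, hkK⟩ := Finset.mem_Icc.1 hk
    exact dstar_le_dstar_natCast_mul hk1 (le_trans (Nat.mul_le_mul_right nt (by omega)) hnr) hr1

/-- If `n_r ≥ (K+1)·n_t`, then for every `0 ≤ r ≤ n_t` the symmetric DMT
`min_{k=1,…,K} d*_{k·n_t, n_r}(k·r)` of the `K`-user MIMO multiple access channel equals
the single-user tradeoff `d*_{n_t, n_r}(r)`: single-user performance is achieved for all
multiplexing gains. -/
theorem mac_dmt_single_user_for_many_rx (K nt nr : ℕ) (hK : 1 ≤ K) (hnt : 1 ≤ nt)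
    (hnr : (K + 1) * nt ≤ nr) (r : ℝ) (hr0 : 0 ≤ r) (hr1 : r ≤ (nt : ℝ)) :
    (Finset.Icc 1 K).inf' (Finset.nonempty_Icc.mpr hK)
      (fun k => dstar (k * nt) nr ((k : ℝ) * r)) = dstar nt nr r :=
  mac_dmt_single_user_for_many_rx_general K nt nr hK hnr r hr1
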